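/- Let p ≥ 3, let λ = λ^M be a p-regular partition of n, and let V be a finite-dimensional FΣ_n-module. Then dim Hom_{A_n}(V↓_{A_n}, Hom_F(E^λ_+ ⊕ E^λ_-, E^λ_±)) = dim Hom_{A_n}(Hom_F(E^λ_±, E^λ_+ ⊕ E^λ_-), V*↓_{A_n}) = dim Hom_{Σ_n}(V, End_F(D^λ)). -/

import Mathlib

open scoped Classical

noncomputable section

namespace IrrTensor

/-! ### Partitions as finitely supported functions `ℕ →₀ ℕ` (0-indexed rows) -/

abbrev Ptn := ℕ →₀ ℕ

/-- `f` is weakly decreasing, i.e. a genuine partition shape. -/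
def IsPtn (f : Ptn) : Prop := ∀ ⦃i j : ℕ⦄, i ≤ j → f j ≤ f i

/-- `f` is a partition of `n`. -/
def IsPtnOf (f : Ptn) (n : ℕ) : Prop := IsPtn f ∧ f.sum (fun _ m => m) = n

/-- `p`-regular: no (positive) part is repeated `p` or more times. -/
def PReg (p : ℕ) (f : Ptn) : Prop :=
  ∀ v : ℕ, 0 < v → (f.support.filter (fun i => f i = v)).card < p

/-- the number of (nonzero) parts of `f`. -/
def height (f : Ptn) : ℕ := f.support.card

/-- row `r` carries a removable node, namely `(r, f r - 1)` (0-indexed). -/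
def RemovableAt (f : Ptn) (r : ℕ) : Prop := f (r + 1) < f r

/-- row `r` carries an addable node, namely `(r, f r)` (0-indexed). -/
def AddableAt (f : Ptn) (r : ℕ) : Prop := r = 0 ∨ f r < f (r - 1)

/-- residue of the removable node in row `r` (the residue of a node `(r, c)`,
both coordinates 0-indexed, is `c - r` mod `p`). -/
def resRem (p : ℕ) (f : Ptn) (r : ℕ) : ZMod p := ((f r - 1 : ℕ) : ZMod p) - (r : ZMod p)

/-- residue of the addable node in row `r`. -/
def resAdd (p : ℕ) (f : Ptn) (r : ℕ) : ZMod p := ((f r : ℕ) : ZMod p) - (r : ZMod p)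

/-- The removable node in row `r` is *normal*: every addable node of the same residue
strictly above it can be matched injectively with a distinct removable node of the same
residue strictly between them (the usual lattice/parenthesis condition). -/
def NormalAt (p : ℕ) (f : Ptn) (r : ℕ) : Prop :=
  RemovableAt f r ∧ ∃ m : ℕ → ℕ,
    Set.InjOn m {s | s < r ∧ AddableAt f s ∧ resAdd p f s = resRem p f r} ∧
    ∀ s, s < r → AddableAt f s → resAdd p f s = resRem p f r →
      s < m s ∧ m s < r ∧ RemovableAt f (m s) ∧ resRem p f (m s) = resRem p f r

/-- The addable node in row `r` is *conormal* (the dual condition). -/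
def ConormalAt (p : ℕ) (f : Ptn) (r : ℕ) : Prop :=
  AddableAt f r ∧ ∃ m : ℕ → ℕ,
    Set.InjOn m {s | r < s ∧ RemovableAt f s ∧ resRem p f s = resAdd p f r} ∧
    ∀ s, r < s → RemovableAt f s → resRem p f s = resAdd p f r →
      r < m s ∧ m s < s ∧ AddableAt f (m s) ∧ resAdd p f (m s) = resAdd p f r

/-- rows carrying a normal node of residue `i`. -/
def normalRows (p : ℕ) (i : ZMod p) (f : Ptn) : Finset ℕ :=
  f.support.filter (fun r => NormalAt p f r ∧ resRem p f r = i)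

/-- `ε_i(f)`: the number of normal nodes of residue `i`. -/
def eps (p : ℕ) (i : ZMod p) (f : Ptn) : ℕ := (normalRows p i f).card

/-- total number of normal nodes. -/
def normalCount (p : ℕ) (f : Ptn) : ℕ :=
  (f.support.filter (fun r => NormalAt p f r)).card

/-- JS-partition: exactly one normal node. -/
def IsJS (p : ℕ) (f : Ptn) : Prop := normalCount p f = 1

/-- remove a node from row `r`. -/
def removeAt (f : Ptn) (r : ℕ) : Ptn := f.update r (f r - 1)

/-- `ẽ_i f`: remove the bottom normal node of residue `i` (junk value `f` if none). -/
def etilde (p : ℕ) (i : ZMod p) (f : Ptn) : Ptn :=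
  if h : (normalRows p i f).Nonempty then removeAt f ((normalRows p i f).max' h) else f

def removableRows (f : Ptn) : Finset ℕ := f.support.filter (fun r => RemovableAt f r)

/-- remove the top removable node. -/
def removeTopNode (f : Ptn) : Ptn :=
  if h : (removableRows f).Nonempty then removeAt f ((removableRows f).min' h) else f

/-- add the bottom addable node (a new row of length 1 at the bottom). -/
def addBottomNode (f : Ptn) : Ptn := f.update f.support.card (f f.support.card + 1)

/-- strict lexicographic order on partitions: `f <lex g`. -/
def lexLT (f g : Ptn) : Prop := ∃ k : ℕ, (∀ i < k, f i = g i) ∧ f k < g k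

def lexLE (f g : Ptn) : Prop := f = g ∨ lexLT f g

/-- the number of nodes of `f` of residue `i` (the residue content). -/
def cnt (p : ℕ) (f : Ptn) (i : ZMod p) : ℕ :=
  ∑ r ∈ f.support, ((Finset.range (f r)).filter (fun c => ((c : ZMod p) - (r : ZMod p)) = i)).card

/-- the two-row partition `(a, b)`. -/
def twoRow (a b : ℕ) : Ptn := Finsupp.single 0 a + Finsupp.single 1 b

/-- the three-row partition `(a, b, c)`. -/
def threeRow (a b c : ℕ) : Ptn :=
  Finsupp.single 0 a + Finsupp.single 1 b + Finsupp.single 2 c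

/-! ### Representation-theoretic generalities -/

variable {F : Type} [Field F] {G : Type} [Group G]
variable {V W : Type} [AddCommGroup V] [Module F V] [AddCommGroup W] [Module F W]

/-- `U` is a subrepresentation of `ρ`. -/
def IsSubrep (ρ : Representation F G V) (U : Submodule F V) : Prop :=
  ∀ (g : G), ∀ v ∈ U, ρ g v ∈ U

/-- the representation induced on a subrepresentation. -/
def subRepn (ρ : Representation F G V) (U : Submodule F V) (h : IsSubrep ρ U) :
    Representation F G ↥U where
  toFun g := (ρ g).restrict (fun v hv => h g v hv)
  map_one' := by
    ext v
    simp [LinearMap.restrict_apply]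
  map_mul' g₁ g₂ := by
    ext v
    simp [LinearMap.restrict_apply]

/-- `f` is a homomorphism of representations from `ρ` to `σ`. -/
def IsRepHom (ρ : Representation F G V) (σ : Representation F G W) (f : V →ₗ[F] W) : Prop :=
  ∀ (g : G) (v : V), f (ρ g v) = σ g (f v)

/-- `ρ ≅ σ` as representations. -/
def RepIso (ρ : Representation F G V) (σ : Representation F G W) : Prop :=
  ∃ e : V ≃ₗ[F] W, IsRepHom ρ σ e.toLinearMap

/-- irreducibility of a representation. -/
def Irr (ρ : Representation F G V) : Prop :=
  (⊥ : Submodule F V) ≠ ⊤ ∧ ∀ U : Submodule F V, IsSubrep ρ U → U = ⊥ ∨ U = ⊤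

/-- the `F`-space of homomorphisms of representations `ρ → σ`. -/
def repHom (ρ : Representation F G V) (σ : Representation F G W) :
    Submodule F (V →ₗ[F] W) where
  carrier := {f | IsRepHom ρ σ f}
  add_mem' := by
    intro f g hf hg gg v
    simp only [LinearMap.add_apply, hf gg v, hg gg v, map_add]
  zero_mem' := by intro g v; simp
  smul_mem' := by
    intro c f hf g v
    simp only [LinearMap.smul_apply, hf g v, map_smul]

/-- `dim Hom_G(ρ, σ)`. -/
def homDim (ρ : Representation F G V) (σ : Representation F G W) : ℕ :=
  Module.finrank F (repHom ρ σ)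

/-- `dim End_G(ρ)`. -/
def endDim (ρ : Representation F G V) : ℕ := homDim ρ ρ

/-- restriction of a representation to a subgroup. -/
def resRep (ρ : Representation F G V) (H : Subgroup G) : Representation F H V :=
  ρ.comp H.subtype

/-- a bundled representation of `G` over `F`. -/
structure RepOb (F : Type) [Field F] (G : Type) [Group G] where
  carrier : Type
  [acg : AddCommGroup carrier]
  [mod : Module F carrier]
  rep : Representation F G carrier

attribute [instance] RepOb.acg RepOb.mod

def RepOb.of (ρ : Representation F G V) : RepOb F G :=
  { carrier := V, rep := ρ }

/-- direct sum of two representations. -/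
def prodRep (ρ : Representation F G V) (σ : Representation F G W) :
    Representation F G (V × W) where
  toFun g := (ρ g).prodMap (σ g)
  map_one' := by
    ext v <;> simp
  map_mul' g h := by
    ext v <;> simp

/-- direct sum of a family of representations. -/
def piRep {ι : Type} (M : ι → RepOb F G) : Representation F G (∀ i, (M i).carrier) where
  toFun g := LinearMap.pi fun i => ((M i).rep g).comp (LinearMap.proj i)
  map_one' := by
    ext v i
    simp
  map_mul' g h := by
    ext v i
    simp

/-- `σ` is (isomorphic to) a composition factor of `ρ`, i.e. a quotient of a
subrepresentation. -/
def IsCompFactor (ρ : Representation F G V) (σ : Representation F G W) : Prop :=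
  ∃ (U : Submodule F V) (hU : IsSubrep ρ U) (ψ : ↥U →ₗ[F] W),
    Function.Surjective ψ ∧ IsRepHom (subRepn ρ U hU) σ ψ

/-- `σ` embeds into `ρ` (is isomorphic to a subrepresentation). -/
def Embeds (σ : Representation F G W) (ρ : Representation F G V) : Prop :=
  ∃ f : W →ₗ[F] V, Function.Injective f ∧ IsRepHom σ ρ f

/-- `σ` is a quotient of `ρ`. -/
def IsQuotientRep (ρ : Representation F G V) (σ : Representation F G W) : Prop :=
  ∃ f : V →ₗ[F] W, Function.Surjective f ∧ IsRepHom ρ σ f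

/-- `σ` is a direct summand of `ρ`. -/
def IsSummandRep (ρ : Representation F G V) (σ : Representation F G W) : Prop :=
  ∃ C : RepOb F G, RepIso ρ (prodRep σ C.rep)

/-- `U` is a simple subrepresentation. -/
def IsSimpleSubrep (ρ : Representation F G V) (U : Submodule F V) : Prop :=
  IsSubrep ρ U ∧ U ≠ ⊥ ∧ ∀ U' ≤ U, IsSubrep ρ U' → U' = ⊥ ∨ U' = U

/-- the socle: the sum of all simple subrepresentations. -/
def socle (ρ : Representation F G V) : Submodule F V := sSup {U | IsSimpleSubrep ρ U}

/-- `ρ` has simple socle. -/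
def HasSimpleSocle (ρ : Representation F G V) : Prop := IsSimpleSubrep ρ (socle ρ)

/-! ### Symmetric and alternating groups, Young subgroups, permutation and Specht modules -/

/-- the sign representation of the symmetric group. -/
def sgnRep (F : Type) [Field F] (n : ℕ) : Representation F (Equiv.Perm (Fin n)) F where
  toFun g := ((Equiv.Perm.sign g : ℤ) : F) • LinearMap.id
  map_one' := by
    simp [Module.End.one_eq_id]
  map_mul' g h := by
    ext
    simp [mul_comm, mul_assoc, mul_smul]

/-- restriction of a representation of `Σ_n` to the alternating group `A_n`. -/
def resAlt {n : ℕ} (ρ : Representation F (Equiv.Perm (Fin n)) V) :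
    Representation F (alternatingGroup (Fin n)) V :=
  ρ.comp (alternatingGroup (Fin n)).subtype

/-- transport of permutations along an equivalence, as a monoid homomorphism. -/
def permCongrHom {α β : Type} (e : α ≃ β) : Equiv.Perm α →* Equiv.Perm β where
  toFun g := (e.symm.trans g).trans e
  map_one' := by ext x; simp
  map_mul' g h := by ext x; simp

/-- the standard embedding `Σ_a × Σ_b → Σ_n` (for `a + b = n`), with `Σ_a` acting on the
first `a` points and `Σ_b` on the last `b` points; its image is the Young subgroup
`Σ_{(a,b)}`. -/
def youngPairHom (a b n : ℕ) (h : a + b = n) :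
    Equiv.Perm (Fin a) × Equiv.Perm (Fin b) →* Equiv.Perm (Fin n) :=
  (permCongrHom (finSumFinEquiv.trans (finCongr h))).comp (Equiv.Perm.sumCongrHom (Fin a) (Fin b))

/-- the standard embedding `Σ_m → Σ_n` for `m ≤ n`. -/
def stdEmbed (m n : ℕ) (h : m + (n - m) = n) : Equiv.Perm (Fin m) →* Equiv.Perm (Fin n) :=
  (youngPairHom m (n - m) n h).comp (MonoidHom.inl _ _)

/-- the outer tensor product of a representation of `A` and one of `B`, as a
representation of `A × B`. -/
def outerTensor {A B : Type} [Group A] [Group B]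
    (ρ : Representation F A V) (σ : Representation F B W) :
    Representation F (A × B) (TensorProduct F V W) :=
  Representation.tprod
    (ρ.comp (MonoidHom.fst A B) : Representation F (A × B) V)
    (σ.comp (MonoidHom.snd A B) : Representation F (A × B) W)

/-- the index of the interval block of the composition `α` containing `x`
(blocks `{0, …, α₀ - 1}`, `{α₀, …, α₀ + α₁ - 1}`, …). -/
def blockOf (α : Ptn) (x : ℕ) : ℕ := sInf {i | x < ∑ j ∈ Finset.range (i + 1), α j}

/-- the position of `x` inside its block: the column of `x` in the tableau obtained by
filling the Young diagram of `α` row by row with `0, 1, 2, …`. -/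
def colOf (α : Ptn) (x : ℕ) : ℕ := x - ∑ j ∈ Finset.range (blockOf α x), α j

/-- the Young subgroup `Σ_α ≤ Σ_n`: permutations preserving each interval block. -/
def youngSubgroup (α : Ptn) (n : ℕ) : Subgroup (Equiv.Perm (Fin n)) where
  carrier := {g | ∀ x : Fin n, blockOf α ((g x : Fin n) : ℕ) = blockOf α (x : ℕ)}
  one_mem' := by intro x; simp
  mul_mem' := by
    intro g h hg hh x
    simpa [Equiv.Perm.mul_apply] using (hg (h x)).trans (hh x)
  inv_mem' := by
    intro g hg x
    simpa using (hg (g⁻¹ x)).symm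

/-- the permutation module `M^α = 1 ↑_{Σ_α}^{Σ_n}`, realized on the cosets
`Σ_n / Σ_α` (whose elements are the `α`-tabloids). -/
def permRep (F : Type) [Field F] (α : Ptn) (n : ℕ) :
    Representation F (Equiv.Perm (Fin n))
      ((Equiv.Perm (Fin n) ⧸ youngSubgroup α n) →₀ F) :=
  { toFun := fun g => Finsupp.lmapDomain F F (fun x : Equiv.Perm (Fin n) ⧸ youngSubgroup α n => g • x)
    map_one' := by
      ext x y
      simp [Finsupp.lmapDomain_apply, Finsupp.mapDomain_single]
    map_mul' := fun g h => by
      ext x y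
      simp [Finsupp.lmapDomain_apply, Finsupp.mapDomain_single, mul_smul] }

/-- the polytabloid attached to the identity tableau: the signed column sum
`e_{t₀} = ∑_{τ ∈ C_{t₀}} sgn(τ) {τ t₀}`. -/
def spechtGen (F : Type) [Field F] (α : Ptn) (n : ℕ) :
    (Equiv.Perm (Fin n) ⧸ youngSubgroup α n) →₀ F :=
  ∑ τ ∈ Finset.univ.filter
      (fun τ : Equiv.Perm (Fin n) => ∀ x : Fin n, colOf α ((τ x : Fin n) : ℕ) = colOf α (x : ℕ)),
    ((Equiv.Perm.sign τ : ℤ) : F) • Finsupp.single (QuotientGroup.mk τ) 1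

/-- the Specht module `S^α ⊆ M^α`: the span of all polytabloids. -/
def spechtSubmodule (F : Type) [Field F] (α : Ptn) (n : ℕ) :
    Submodule F ((Equiv.Perm (Fin n) ⧸ youngSubgroup α n) →₀ F) :=
  Submodule.span F (Set.range fun g : Equiv.Perm (Fin n) => permRep F α n g (spechtGen F α n))

/-! ### Axiomatic interface for the modular irreducible representations `D^λ`

The family `D^λ` (for `λ` `p`-regular of `n`) is characterized (uniquely, up to
isomorphism) by: each `D^λ` is irreducible, they are pairwise non-isomorphic and exhaust
all irreducibles, `D^λ` occurs as a composition factor of the permutation module `M^λ`,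
and every composition factor `D^μ` of `M^λ` satisfies `μ ≥ λ` lexicographically.
The Mullineux map is characterized by `D^{λ^M} ≅ D^λ ⊗ sgn`. -/
structure SMTheory (F : Type) [Field F] (p n : ℕ) where
  D : Ptn → RepOb F (Equiv.Perm (Fin n))
  mull : Ptn → Ptn
  D_irr : ∀ lam, IsPtnOf lam n → PReg p lam → Irr (D lam).rep
  D_inj : ∀ lam mu, IsPtnOf lam n → PReg p lam → IsPtnOf mu n → PReg p mu →
    RepIso (D lam).rep (D mu).rep → lam = mu
  D_exh : ∀ (W : Type) [AddCommGroup W] [Module F W]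
    (σ : Representation F (Equiv.Perm (Fin n)) W), Irr σ →
      ∃ lam, IsPtnOf lam n ∧ PReg p lam ∧ RepIso σ (D lam).rep
  D_perm : ∀ lam, IsPtnOf lam n → PReg p lam → IsCompFactor (permRep F lam n) (D lam).rep
  D_tri : ∀ lam mu, IsPtnOf lam n → PReg p lam → IsPtnOf mu n → PReg p mu →
    IsCompFactor (permRep F lam n) (D mu).rep → lexLE lam mu
  mull_reg : ∀ lam, IsPtnOf lam n → PReg p lam →
    IsPtnOf (mull lam) n ∧ PReg p (mull lam)
  mull_spec : ∀ lam, IsPtnOf lam n → PReg p lam →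
    RepIso (D (mull lam)).rep ((D lam).rep.tprod (sgnRep F n))

/-!
Write `E = E₊ ⊕ E₋ ≅ D↓`. Conjugation by an odd permutation swaps `E₊` and `E₋` (Clifford
theory), so the two summands of `End_F(D)↓ ≅ Hom(E, E₊) ⊕ Hom(E, E₋)` contribute equally to
`dim Hom_{A_n}(V↓, End_F(D)↓)`. Since `p ≠ 2`, an `A_n`-invariant vector of a `Σ_n`-module splits
into a `Σ_n`-invariant and a sign-semi-invariant one, so this dimension is
`dim Hom_{Σ_n}(V, End_F(D)) + dim Hom_{Σ_n}(V, End_F(D) ⊗ sgn)`, and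
`End_F(D) ⊗ sgn ≅ Hom_F(D, D ⊗ sgn) ≅ End_F(D)` because `λ = λ^M`. The first equality is duality:
the trace pairing identifies `Hom_F(E₊, E)*` with `Hom_F(E, E₊)`.
-/

section Intertwining

variable {X Y Z X' Y' : Type} [AddCommGroup X] [Module F X] [AddCommGroup Y] [Module F Y]
  [AddCommGroup Z] [Module F Z] [AddCommGroup X'] [Module F X'] [AddCommGroup Y'] [Module F Y']

lemma finrank_eq_of_mem_iff {M N : Type} [AddCommMonoid M] [Module F M] [AddCommMonoid N]
    [Module F N] (e : M ≃ₗ[F] N) {p : Submodule F M} {q : Submodule F N}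
    (h : ∀ x, x ∈ p ↔ e x ∈ q) : Module.finrank F p = Module.finrank F q := by
  have hpq : p.map (e : M →ₗ[F] N) = q := by
    ext y
    simpa using h (e.symm y)
  rw [← hpq, LinearEquiv.finrank_map_eq]

lemma IsRepHom.comp {ρ : Representation F G X} {σ : Representation F G Y}
    {τ : Representation F G Z} {g : Y →ₗ[F] Z} {f : X →ₗ[F] Y}
    (hg : IsRepHom σ τ g) (hf : IsRepHom ρ σ f) : IsRepHom ρ τ (g ∘ₗ f) := fun a v => by
  simp only [LinearMap.comp_apply, hf a v, hg a (f v)]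

lemma IsRepHom.symm {ρ : Representation F G X} {σ : Representation F G Y} {e : X ≃ₗ[F] Y}
    (he : IsRepHom ρ σ e) : IsRepHom σ ρ e.symm := fun a w => e.injective <| by
  simpa using (he a (e.symm w)).symm

lemma RepIso.refl (ρ : Representation F G X) : RepIso ρ ρ :=
  ⟨LinearEquiv.refl F X, fun _ _ => rfl⟩

lemma RepIso.symm {ρ : Representation F G X} {σ : Representation F G Y} :
    RepIso ρ σ → RepIso σ ρ
  | ⟨e, he⟩ => ⟨e.symm, he.symm⟩

lemma RepIso.trans {ρ : Representation F G X} {σ : Representation F G Y}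
    {τ : Representation F G Z} : RepIso ρ σ → RepIso σ τ → RepIso ρ τ
  | ⟨e₁, he₁⟩, ⟨e₂, he₂⟩ => ⟨e₁.trans e₂, he₂.comp he₁⟩

lemma RepIso.prod {σ₁ : Representation F G X} {σ₂ : Representation F G X'}
    {τ₁ : Representation F G Y} {τ₂ : Representation F G Y'} :
    RepIso σ₁ σ₂ → RepIso τ₁ τ₂ → RepIso (prodRep σ₁ τ₁) (prodRep σ₂ τ₂)
  | ⟨e₁, he₁⟩, ⟨e₂, he₂⟩ => ⟨e₁.prodCongr e₂, fun g v => Prod.ext (he₁ g v.1) (he₂ g v.2)⟩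

lemma RepIso.prodComm (σ : Representation F G X) (τ : Representation F G Y) :
    RepIso (prodRep σ τ) (prodRep τ σ) :=
  ⟨LinearEquiv.prodComm F X Y, fun _ _ => rfl⟩

lemma RepIso.linHom {σ₁ : Representation F G X} {σ₂ : Representation F G X'}
    {τ₁ : Representation F G Y} {τ₂ : Representation F G Y'} :
    RepIso σ₁ σ₂ → RepIso τ₁ τ₂ → RepIso (σ₁.linHom τ₁) (σ₂.linHom τ₂)
  | ⟨e₁, he₁⟩, ⟨e₂, he₂⟩ => ⟨e₁.arrowCongr e₂, fun g f => LinearMap.ext fun x => by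
      have h₁ : e₁.symm (σ₂ g⁻¹ x) = σ₁ g⁻¹ (e₁.symm x) := he₁.symm g⁻¹ x
      have h₂ := he₂ g (f (σ₁ g⁻¹ (e₁.symm x)))
      simp only [LinearEquiv.coe_coe] at h₂
      simp [LinearEquiv.arrowCongr_apply, h₁, h₂]⟩

lemma RepIso.finrank_invariants_eq {ρ : Representation F G X} {σ : Representation F G Y} :
    RepIso ρ σ → Module.finrank F ρ.invariants = Module.finrank F σ.invariants
  | ⟨e, he⟩ => finrank_eq_of_mem_iff e fun x => by
      simp only [Representation.mem_invariants]
      refine forall_congr' fun g => ?_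
      rw [← e.injective.eq_iff]
      exact iff_of_eq (congrArg (· = e x) (he g x))

lemma repHom_eq_invariants (ρ : Representation F G X) (σ : Representation F G Y) :
    repHom ρ σ = (ρ.linHom σ).invariants := by
  ext f
  rw [Representation.mem_invariants]
  exact ((Representation.mem_linHom_invariants_iff_isIntertwining f).trans
    (Representation.isIntertwiningMap_iff _ _ f)).symm

lemma homDim_eq_finrank_invariants (ρ : Representation F G X) (σ : Representation F G Y) :
    homDim ρ σ = Module.finrank F (ρ.linHom σ).invariants := by
  rw [homDim, repHom_eq_invariants]

lemma homDim_congr {ρ : Representation F G X} {ρ' : Representation F G X'}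
    {σ : Representation F G Y} {σ' : Representation F G Y'} (h₁ : RepIso ρ ρ')
    (h₂ : RepIso σ σ') : homDim ρ σ = homDim ρ' σ' := by
  rw [homDim_eq_finrank_invariants, homDim_eq_finrank_invariants]
  exact (h₁.linHom h₂).finrank_invariants_eq

lemma IsCompFactor.finiteDimensional [FiniteDimensional F V] {ρ : Representation F G V}
    {σ : Representation F G W} (h : IsCompFactor ρ σ) : FiniteDimensional F W := by
  obtain ⟨U, -, ψ, hψ, -⟩ := h
  exact Module.Finite.of_surjective ψ hψ

end Intertwining

section Constructions

variable {X Y Z : Type} [AddCommGroup X] [Module F X] [AddCommGroup Y] [Module F Y]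
  [AddCommGroup Z] [Module F Z]

lemma RepIso.linHom_prodRep (σ : Representation F G X) (τ₁ : Representation F G Y)
    (τ₂ : Representation F G Z) :
    RepIso (σ.linHom (prodRep τ₁ τ₂)) (prodRep (σ.linHom τ₁) (σ.linHom τ₂)) :=
  ⟨(LinearMap.prodEquiv (R := F) (S := F)).symm, fun _ _ => rfl⟩

def invariantsProdRepEquiv (ρ : Representation F G X) (σ : Representation F G Y) :
    (prodRep ρ σ).invariants ≃ₗ[F] ρ.invariants × σ.invariants where
  toFun x := (⟨x.1.1, fun g => congrArg Prod.fst (x.2 g)⟩,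
    ⟨x.1.2, fun g => congrArg Prod.snd (x.2 g)⟩)
  invFun y := ⟨(y.1, y.2), fun g => Prod.ext (y.1.2 g) (y.2.2 g)⟩
  map_add' _ _ := rfl
  map_smul' _ _ := rfl
  left_inv _ := rfl
  right_inv _ := rfl

lemma homDim_prodRep_right [FiniteDimensional F X] [FiniteDimensional F Y]
    [FiniteDimensional F Z] (ρ : Representation F G X) (τ₁ : Representation F G Y)
    (τ₂ : Representation F G Z) :
    homDim ρ (prodRep τ₁ τ₂) = homDim ρ τ₁ + homDim ρ τ₂ := by
  rw [homDim_eq_finrank_invariants, homDim_eq_finrank_invariants, homDim_eq_finrank_invariants,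
    (RepIso.linHom_prodRep ρ τ₁ τ₂).finrank_invariants_eq,
    (invariantsProdRepEquiv _ _).finrank_eq, Module.finrank_prod]

variable {G' : Type} [Group G']

lemma linHom_comp (φ : G' →* G) (σ : Representation F G X) (τ : Representation F G Y) :
    (σ.linHom τ).comp φ = Representation.linHom (σ.comp φ) (τ.comp φ) := by
  ext g f : 2
  simp

lemma dual_comp (φ : G' →* G) (ρ : Representation F G X) :
    ρ.dual.comp φ = Representation.dual (ρ.comp φ) := by
  ext g f : 2
  simp

lemma invariants_comp_of_surjective {φ : G' →* G} (hφ : Function.Surjective φ)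
    (ρ : Representation F G X) : Representation.invariants (ρ.comp φ) = ρ.invariants := by
  ext x
  simp only [Representation.mem_invariants, MonoidHom.coe_comp, Function.comp_apply]
  exact (hφ.forall (p := fun g => ρ g x = x)).symm

lemma homDim_comp_of_surjective {φ : G' →* G} (hφ : Function.Surjective φ)
    (σ : Representation F G X) (τ : Representation F G Y) :
    homDim (σ.comp φ) (τ.comp φ) = homDim σ τ := by
  rw [homDim_eq_finrank_invariants, homDim_eq_finrank_invariants, ← linHom_comp,
    invariants_comp_of_surjective hφ]

lemma RepIso.resRep_comp_conjNormal (ρ : Representation F G X) (H : Subgroup G) [H.Normal]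
    (g : G) : RepIso ((resRep ρ H).comp (MulAut.conjNormal g).toMonoidHom) (resRep ρ H) := by
  refine ⟨.ofLinearMap (ρ g⁻¹) (ρ g) (by ext; simp) (by ext; simp), fun h v => ?_⟩
  change ρ g⁻¹ (ρ (g * h * g⁻¹) v) = ρ h (ρ g⁻¹ v)
  rw [← Module.End.mul_apply, ← map_mul, ← Module.End.mul_apply, ← map_mul]
  group

lemma homDim_resRep_comp_conjNormal (ρ : Representation F G X) {H : Subgroup G} [H.Normal]
    (σ : Representation F H Y) (g : G) :
    homDim (resRep ρ H) (σ.comp (MulAut.conjNormal g).toMonoidHom) = homDim (resRep ρ H) σ := by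
  rw [← homDim_comp_of_surjective (φ := (MulAut.conjNormal g).toMonoidHom)
    (MulEquiv.surjective _) (resRep ρ H) σ]
  exact homDim_congr (RepIso.resRep_comp_conjNormal ρ H g).symm (RepIso.refl _)

end Constructions

section Duality

variable {X Y : Type} [AddCommGroup X] [Module F X] [AddCommGroup Y] [Module F Y]

lemma homDim_dual_comm (σ : Representation F G X) (τ : Representation F G Y) :
    homDim σ τ.dual = homDim τ σ.dual := by
  rw [homDim_eq_finrank_invariants, homDim_eq_finrank_invariants]
  let e : (X →ₗ[F] Module.Dual F Y) ≃ₗ[F] (Y →ₗ[F] Module.Dual F X) := LinearMap.lflip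
  refine finrank_eq_of_mem_iff e fun f => forall_congr' fun g => ?_
  rw [← e.injective.eq_iff]
  rfl

variable (X Y) in
def tracePairing : (Y →ₗ[F] X) →ₗ[F] Module.Dual F (X →ₗ[F] Y) :=
  (LinearMap.llcomp F X Y X).compr₂ (LinearMap.trace F X)

lemma tracePairing_apply (g : Y →ₗ[F] X) (f : X →ₗ[F] Y) :
    tracePairing X Y g f = LinearMap.trace F X (g ∘ₗ f) := rfl

variable [FiniteDimensional F X]

lemma tracePairing_injective : Function.Injective (tracePairing (F := F) X Y) := by
  rw [← LinearMap.ker_eq_bot, LinearMap.ker_eq_bot']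
  intro g hg
  ext y
  refine (Module.forall_dual_apply_eq_zero_iff F (g y)).mp fun φ => ?_
  have h := LinearMap.congr_fun hg (φ.smulRight y)
  rwa [tracePairing_apply, show g ∘ₗ φ.smulRight y = φ.smulRight (g y) by ext; simp,
    LinearMap.trace_smulRight] at h

variable [FiniteDimensional F Y]

lemma RepIso.linHom_dual_linHom (σ : Representation F G X) (τ : Representation F G Y) :
    RepIso (τ.linHom σ) (σ.linHom τ).dual := by
  have hdim : Module.finrank F (Y →ₗ[F] X) = Module.finrank F (Module.Dual F (X →ₗ[F] Y)) := by
    rw [Subspace.dual_finrank_eq, Module.finrank_linearMap, Module.finrank_linearMap, mul_comm]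
  refine ⟨LinearMap.linearEquivOfInjective _ tracePairing_injective hdim, fun g h => ?_⟩
  ext f
  change LinearMap.trace F X ((σ g ∘ₗ h ∘ₗ τ g⁻¹) ∘ₗ f) =
    LinearMap.trace F X (h ∘ₗ (τ g⁻¹ ∘ₗ f ∘ₗ σ g⁻¹⁻¹))
  rw [inv_inv, LinearMap.comp_assoc, LinearMap.trace_comp_comm' _ (σ g)]
  simp only [LinearMap.comp_assoc]

end Duality

section Clifford

variable {X W₁ W₂ : Type} [AddCommGroup X] [Module F X] [AddCommGroup W₁] [Module F W₁]
  [AddCommGroup W₂] [Module F W₂]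

lemma IsRepHom.bijective_of_irr {ρ : Representation F G W₁} {σ : Representation F G W₂}
    {f : W₁ →ₗ[F] W₂} (hf : IsRepHom ρ σ f) (hρ : Irr ρ) (hσ : Irr σ) (hf0 : f ≠ 0) :
    Function.Bijective f := by
  have hker : IsSubrep ρ (LinearMap.ker f) := fun g v hv => by
    rw [LinearMap.mem_ker] at hv ⊢
    rw [hf g v, hv, map_zero]
  have hrange : IsSubrep σ (LinearMap.range f) := by
    rintro g _ ⟨v, rfl⟩
    exact ⟨ρ g v, hf g v⟩
  constructor
  · rcases hρ.2 _ hker with h | h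
    · exact LinearMap.ker_eq_bot.mp h
    · exact absurd (LinearMap.ker_eq_top.mp h) hf0
  · rcases hσ.2 _ hrange with h | h
    · exact absurd (LinearMap.range_eq_bot.mp h) hf0
    · exact LinearMap.range_eq_top.mp h

lemma Irr.comp_of_surjective {G' : Type} [Group G'] {σ : Representation F G W₁} (hσ : Irr σ)
    {φ : G' →* G} (hφ : Function.Surjective φ) : Irr (σ.comp φ) :=
  ⟨hσ.1, fun U hU => hσ.2 U fun g => by obtain ⟨g', rfl⟩ := hφ g; exact hU g'⟩

lemma isSubrep_ker_snd {ρ : Representation F G X} {σ₁ : Representation F G W₁}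
    {σ₂ : Representation F G W₂} {e : X →ₗ[F] W₁ × W₂} (he : IsRepHom ρ (prodRep σ₁ σ₂) e) :
    IsSubrep ρ (LinearMap.ker (LinearMap.snd F W₁ W₂ ∘ₗ e)) := fun g v hv => by
  simp only [LinearMap.mem_ker, LinearMap.comp_apply, LinearMap.snd_apply] at hv ⊢
  rw [he g v]
  change σ₂ g (e v).2 = 0
  rw [hv, map_zero]

lemma not_isSubrep_ker_snd {ρ : Representation F G X} (hρ : Irr ρ)
    (h₁ : (⊥ : Submodule F W₁) ≠ ⊤) (h₂ : (⊥ : Submodule F W₂) ≠ ⊤) (e : X ≃ₗ[F] W₁ × W₂) :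
    ¬ IsSubrep ρ (LinearMap.ker (LinearMap.snd F W₁ W₂ ∘ₗ e.toLinearMap)) := by
  intro hK
  rcases hρ.2 _ hK with h | h
  · obtain ⟨w, -, hw⟩ := (Submodule.ne_bot_iff _).mp h₁.symm
    have hmem : e.symm (w, 0) ∈ LinearMap.ker (LinearMap.snd F W₁ W₂ ∘ₗ e.toLinearMap) := by
      simp
    rw [h, Submodule.mem_bot, LinearEquiv.map_eq_zero_iff] at hmem
    exact hw (congrArg Prod.fst hmem)
  · obtain ⟨w, -, hw⟩ := (Submodule.ne_bot_iff _).mp h₂.symm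
    have hmem : e.symm (0, w) ∈ LinearMap.ker (LinearMap.snd F W₁ W₂ ∘ₗ e.toLinearMap) :=
      h ▸ Submodule.mem_top
    exact hw (by simpa using hmem)

variable {n : ℕ}

lemma IsSubrep.of_resAlt {ρ : Representation F (Equiv.Perm (Fin n)) X} {K : Submodule F X}
    (hK : IsSubrep (resAlt ρ) K) {σ₀ : Equiv.Perm (Fin n)} (hσ₀ : Equiv.Perm.sign σ₀ = -1)
    (hσ₀K : ∀ v ∈ K, ρ σ₀ v ∈ K) : IsSubrep ρ K := by
  intro g v hv
  rcases Int.units_eq_one_or (Equiv.Perm.sign g) with hg | hg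
  · exact hK ⟨g, hg⟩ v hv
  · have hgσ₀ : g * σ₀⁻¹ ∈ alternatingGroup (Fin n) := by
      simp [Equiv.Perm.mem_alternatingGroup, hg, hσ₀]
    have := hK ⟨_, hgσ₀⟩ _ (hσ₀K v hv)
    rwa [resAlt, MonoidHom.comp_apply, Subgroup.coe_subtype, ← Module.End.mul_apply, ← map_mul,
      inv_mul_cancel_right] at this

variable {ρ : Representation F (Equiv.Perm (Fin n)) X}
  {σ₁ : Representation F (alternatingGroup (Fin n)) W₁}
  {σ₂ : Representation F (alternatingGroup (Fin n)) W₂}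

lemma exists_sign_eq_neg_one_of_split (hρ : Irr ρ) (hσ₁ : Irr σ₁) (hσ₂ : Irr σ₂)
    (h : RepIso (resAlt ρ) (prodRep σ₁ σ₂)) : ∃ σ₀ : Equiv.Perm (Fin n), σ₀.sign = -1 := by
  obtain ⟨e, he⟩ := h
  by_contra! hodd
  refine not_isSubrep_ker_snd hρ hσ₁.1 hσ₂.1 e fun g => ?_
  exact isSubrep_ker_snd he ⟨g, (Int.units_eq_one_or _).resolve_right (hodd g)⟩

/-- The `W₁ → W₂` component of `ρ σ₀` intertwines `σ₁` with the `σ₀`-conjugate of `σ₂`. It is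
nonzero, since otherwise `W₁` would be `Σ_n`-stable, hence an isomorphism by Schur's lemma. -/
lemma RepIso.conjNormal_of_split (hρ : Irr ρ) (hσ₁ : Irr σ₁) (hσ₂ : Irr σ₂)
    (h : RepIso (resAlt ρ) (prodRep σ₁ σ₂)) {σ₀ : Equiv.Perm (Fin n)}
    (hσ₀ : σ₀.sign = -1) : RepIso σ₁ (σ₂.comp (MulAut.conjNormal σ₀).toMonoidHom) := by
  obtain ⟨e, he⟩ := h
  set f : W₁ →ₗ[F] W₂ :=
    LinearMap.snd F W₁ W₂ ∘ₗ e.toLinearMap ∘ₗ ρ σ₀ ∘ₗ e.symm.toLinearMap ∘ₗ LinearMap.inl F W₁ W₂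
  have hf : IsRepHom σ₁ (σ₂.comp (MulAut.conjNormal σ₀).toMonoidHom) f := by
    intro a w
    have hconj : σ₀ * a = (MulAut.conjNormal σ₀ a : Equiv.Perm (Fin n)) * σ₀ := by
      rw [MulAut.conjNormal_apply, inv_mul_cancel_right]
    have h₁ : e.symm (σ₁ a w, 0) = ρ a (e.symm (w, 0)) := by
      refine Eq.trans ?_ (he.symm a (w, 0))
      exact congrArg e.symm (Prod.ext rfl (map_zero (σ₂ a)).symm)
    change (e (ρ σ₀ (e.symm (σ₁ a w, 0)))).2 = σ₂ _ (e (ρ σ₀ (e.symm (w, 0)))).2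
    rw [h₁, ← Module.End.mul_apply, ← map_mul, hconj, map_mul, Module.End.mul_apply]
    exact congrArg Prod.snd (he (MulAut.conjNormal σ₀ a) _)
  have hf0 : f ≠ 0 := by
    intro hf0
    refine not_isSubrep_ker_snd hρ hσ₁.1 hσ₂.1 e (IsSubrep.of_resAlt (isSubrep_ker_snd he) hσ₀
      fun v hv => ?_)
    have hv' : v = e.symm ((e v).1, 0) := e.eq_symm_apply.mpr (Prod.ext rfl hv)
    rw [hv']
    exact LinearMap.congr_fun hf0 (e v).1
  exact ⟨.ofBijective f (hf.bijective_of_irr hσ₁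
    (hσ₂.comp_of_surjective (MulEquiv.surjective _)) hf0), hf⟩

lemma homDim_resAlt_linHom_eq_of_split (hρ : Irr ρ) (hσ₁ : Irr σ₁) (hσ₂ : Irr σ₂)
    (h : RepIso (resAlt ρ) (prodRep σ₁ σ₂)) {Z : Type} [AddCommGroup Z] [Module F Z]
    (τ : Representation F (Equiv.Perm (Fin n)) Z) :
    homDim (resAlt τ) ((prodRep σ₁ σ₂).linHom σ₁) =
      homDim (resAlt τ) ((prodRep σ₁ σ₂).linHom σ₂) := by
  obtain ⟨σ₀, hσ₀⟩ := exists_sign_eq_neg_one_of_split hρ hσ₁ hσ₂ h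
  have h₁ := RepIso.conjNormal_of_split hρ hσ₁ hσ₂ h hσ₀
  have h₂ := RepIso.conjNormal_of_split hρ hσ₂ hσ₁ (h.trans (RepIso.prodComm σ₁ σ₂)) hσ₀
  refine (homDim_resRep_comp_conjNormal τ _ σ₀).symm.trans ?_
  rw [linHom_comp]
  exact homDim_congr (RepIso.refl _)
    (RepIso.linHom ((h₂.symm.prod h₁.symm).trans (RepIso.prodComm _ _)) h₂.symm)

end Clifford

section Sign

open scoped TensorProduct

variable {X Y Q M : Type} [AddCommGroup X] [Module F X] [AddCommGroup Y] [Module F Y]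
  [AddCommGroup Q] [Module F Q] [AddCommGroup M] [Module F M]

lemma RepIso.linHom_tprod [FiniteDimensional F X] (σ : Representation F G X)
    (τ : Representation F G Y) (χ : Representation F G Q) :
    RepIso ((σ.linHom τ).tprod χ) (σ.linHom (τ.tprod χ)) := by
  refine ⟨rTensorHomEquivHomRTensor F X Y Q, fun g t => ?_⟩
  induction t using TensorProduct.induction_on with
  | zero => simp only [map_zero]
  | add s t hs ht => simp only [map_add, hs, ht]
  | tmul f q => ext x; simp

variable {n : ℕ}

lemma resAlt_linHom (σ : Representation F (Equiv.Perm (Fin n)) X)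
    (τ : Representation F (Equiv.Perm (Fin n)) Y) :
    resAlt (σ.linHom τ) = Representation.linHom (resAlt σ) (resAlt τ) :=
  linHom_comp _ σ τ

lemma resAlt_dual (ρ : Representation F (Equiv.Perm (Fin n)) X) :
    resAlt ρ.dual = Representation.dual (resAlt ρ) :=
  dual_comp _ ρ

variable (L : Representation F (Equiv.Perm (Fin n)) M)

def sgnInvariants : Submodule F M where
  carrier := {x | ∀ g, L g x = ((Equiv.Perm.sign g : ℤ) : F) • x}
  add_mem' hx hy g := by rw [map_add, hx g, hy g, smul_add]
  zero_mem' g := by rw [map_zero, smul_zero]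
  smul_mem' c x hx g := by rw [map_smul, hx g, smul_comm]

lemma finrank_invariants_tprod_sgnRep :
    Module.finrank F (L.tprod (sgnRep F n)).invariants = Module.finrank F (sgnInvariants L) := by
  have key : ∀ g y, TensorProduct.rid F M ((L.tprod (sgnRep F n)) g y) =
      ((Equiv.Perm.sign g : ℤ) : F) • L g (TensorProduct.rid F M y) := by
    intro g y
    induction y using TensorProduct.induction_on with
    | zero => simp only [map_zero, smul_zero]
    | add s t hs ht => simp only [map_add, hs, ht, smul_add]
    | tmul x c => simp [sgnRep, smul_smul, mul_comm]
  refine finrank_eq_of_mem_iff (TensorProduct.rid F M) fun y => forall_congr' fun g => ?_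
  rw [← (TensorProduct.rid F M).injective.eq_iff, key]
  rcases Int.units_eq_one_or (Equiv.Perm.sign g) with hg | hg <;>
    simp [hg, neg_eq_iff_eq_neg]

variable {L} {σ₀ : Equiv.Perm (Fin n)} (hσ₀ : σ₀.sign = -1)
include hσ₀

lemma apply_eq_of_mem_invariants_resAlt {x : M} (hx : x ∈ (resAlt L).invariants)
    {g : Equiv.Perm (Fin n)} (hg : g.sign = -1) : L g x = L σ₀ x := by
  have heven : σ₀⁻¹ * g ∈ alternatingGroup (Fin n) := by
    simp [Equiv.Perm.mem_alternatingGroup, hg, hσ₀]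
  rw [← mul_inv_cancel_left σ₀ g, map_mul, Module.End.mul_apply]
  exact congrArg (L σ₀) (hx ⟨_, heven⟩)

variable (h2 : (2 : F) ≠ 0)
include h2

lemma invariants_inf_sgnInvariants : L.invariants ⊓ sgnInvariants L = ⊥ := by
  rw [eq_bot_iff]
  rintro x ⟨hx, hx'⟩
  have h := hx' σ₀
  rw [hx σ₀, hσ₀] at h
  have : (2 : F) • x = 0 := by
    rw [two_smul]; nth_rewrite 1 [h]; simp
  exact (smul_eq_zero.mp this).resolve_left h2

lemma invariants_sup_sgnInvariants : L.invariants ⊔ sgnInvariants L = (resAlt L).invariants := by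
  refine le_antisymm (sup_le (fun x hx a => hx a) fun x hx a => ?_) fun x hx => ?_
  · rw [resAlt, MonoidHom.comp_apply, Subgroup.coe_subtype, hx,
      Equiv.Perm.mem_alternatingGroup.mp a.2]
    simp
  set y := L σ₀ x
  have hy : ∀ g, L g y = L (g * σ₀) x := fun g => by rw [map_mul, Module.End.mul_apply]
  have hodd : ∀ g : Equiv.Perm (Fin n), g.sign = -1 → L g x = y ∧ L g y = x := fun g hg =>
    ⟨apply_eq_of_mem_invariants_resAlt hσ₀ hx hg, by
      rw [hy]; exact hx ⟨g * σ₀, by simp [Equiv.Perm.mem_alternatingGroup, hg, hσ₀]⟩⟩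
  have heven : ∀ g : Equiv.Perm (Fin n), g.sign = 1 → L g x = x ∧ L g y = y := fun g hg =>
    ⟨hx ⟨g, hg⟩, by rw [hy]; exact apply_eq_of_mem_invariants_resAlt hσ₀ hx (by simp [hg, hσ₀])⟩
  have hsplit : x = (2 : F)⁻¹ • (x + y) + (2 : F)⁻¹ • (x - y) := by
    rw [← smul_add, add_add_sub_cancel, ← two_smul F x, smul_smul, inv_mul_cancel₀ h2, one_smul]
  rw [hsplit]
  refine Submodule.add_mem_sup (Submodule.smul_mem _ _ fun g => ?_)
    (Submodule.smul_mem _ _ fun g => ?_) <;>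
  rcases Int.units_eq_one_or g.sign with hg | hg
  · simp [(heven g hg).1, (heven g hg).2]
  · simp [(hodd g hg).1, (hodd g hg).2, add_comm]
  · simp [hg, (heven g hg).1, (heven g hg).2]
  · simp [hg, (hodd g hg).1, (hodd g hg).2]

lemma finrank_invariants_resAlt [FiniteDimensional F M] :
    Module.finrank F (resAlt L).invariants =
      Module.finrank F L.invariants + Module.finrank F (L.tprod (sgnRep F n)).invariants := by
  rw [finrank_invariants_tprod_sgnRep, ← Submodule.finrank_sup_add_finrank_inf_eq,
    invariants_sup_sgnInvariants hσ₀ h2, invariants_inf_sgnInvariants hσ₀ h2, finrank_bot,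
    add_zero]

lemma homDim_resAlt [FiniteDimensional F X] [FiniteDimensional F Y]
    (ρ : Representation F (Equiv.Perm (Fin n)) X) (τ : Representation F (Equiv.Perm (Fin n)) Y) :
    homDim (resAlt ρ) (resAlt τ) = homDim ρ τ + homDim ρ (τ.tprod (sgnRep F n)) := by
  rw [homDim_eq_finrank_invariants, homDim_eq_finrank_invariants, homDim_eq_finrank_invariants,
    ← resAlt_linHom, ← (RepIso.linHom_tprod ρ τ _).finrank_invariants_eq]
  exact finrank_invariants_resAlt hσ₀ h2

lemma homDim_resAlt_linHom_add_of_split [FiniteDimensional F X] [FiniteDimensional F Y]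
    {ρ : Representation F (Equiv.Perm (Fin n)) X} (hρ : RepIso ρ (ρ.tprod (sgnRep F n)))
    {W₁ W₂ : Type} [AddCommGroup W₁] [Module F W₁] [FiniteDimensional F W₁] [AddCommGroup W₂]
    [Module F W₂] [FiniteDimensional F W₂] {σ₁ : Representation F (alternatingGroup (Fin n)) W₁}
    {σ₂ : Representation F (alternatingGroup (Fin n)) W₂} (h : RepIso (resAlt ρ) (prodRep σ₁ σ₂))
    (τ : Representation F (Equiv.Perm (Fin n)) Y) :
    homDim (resAlt τ) ((prodRep σ₁ σ₂).linHom σ₁) + homDim (resAlt τ) ((prodRep σ₁ σ₂).linHom σ₂)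
      = homDim τ (ρ.linHom ρ) + homDim τ (ρ.linHom ρ) := calc
  _ = homDim (resAlt τ) ((prodRep σ₁ σ₂).linHom (prodRep σ₁ σ₂)) :=
    (homDim_prodRep_right _ _ _).symm.trans
      (homDim_congr (.refl _) (RepIso.linHom_prodRep _ _ _).symm)
  _ = homDim (resAlt τ) (resAlt (ρ.linHom ρ)) := by
    rw [resAlt_linHom]
    exact homDim_congr (.refl _) (h.linHom h).symm
  _ = _ := by
    rw [homDim_resAlt hσ₀ h2, homDim_congr (.refl τ)
      ((RepIso.linHom_tprod _ _ _).trans ((RepIso.refl _).linHom hρ.symm))]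

end Sign

theorem statement_6_general (F : Type) [Field F] (p : ℕ) (hp3 : 3 ≤ p)
    [CharP F p] (n : ℕ) (T : SMTheory F p n)
    (lam : Ptn) (h1 : IsPtnOf lam n) (h2 : PReg p lam) (hmull : T.mull lam = lam)
    (E1 E2 : RepOb F (alternatingGroup (Fin n)))
    (hE1 : Irr E1.rep) (hE2 : Irr E2.rep)
    (hsplit : RepIso (resAlt (T.D lam).rep) (prodRep E1.rep E2.rep))
    (V : Type) [AddCommGroup V] [Module F V] [FiniteDimensional F V]
    (ρ : Representation F (Equiv.Perm (Fin n)) V) :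
    homDim (resAlt ρ) ((prodRep E1.rep E2.rep).linHom E1.rep) =
      homDim (E1.rep.linHom (prodRep E1.rep E2.rep)) (resAlt ρ.dual) ∧
    homDim (resAlt ρ) ((prodRep E1.rep E2.rep).linHom E1.rep) =
      homDim ρ ((T.D lam).rep.linHom (T.D lam).rep) := by
  have hD := T.D_irr lam h1 h2
  have hDsgn := T.mull_spec lam h1 h2
  rw [hmull] at hDsgn
  have := (T.D_perm lam h1 h2).finiteDimensional
  obtain ⟨e, -⟩ := id hsplit
  have : FiniteDimensional F E1.carrier :=
    .of_surjective (LinearMap.fst F _ E2.carrier ∘ₗ e.toLinearMap)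
      (Prod.fst_surjective.comp e.surjective)
  have : FiniteDimensional F E2.carrier :=
    .of_surjective (LinearMap.snd F E1.carrier _ ∘ₗ e.toLinearMap)
      (Prod.snd_surjective.comp e.surjective)
  obtain ⟨σ₀, hσ₀⟩ := exists_sign_eq_neg_one_of_split hD hE1 hE2 hsplit
  have h2F : (2 : F) ≠ 0 := Ring.two_ne_zero (by rw [ringChar.eq F p]; omega)
  have hsum := homDim_resAlt_linHom_add_of_split hσ₀ h2F hDsgn hsplit ρ
  rw [← homDim_resAlt_linHom_eq_of_split hD hE1 hE2 hsplit ρ] at hsum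
  refine ⟨?_, by omega⟩
  rw [resAlt_dual, homDim_dual_comm]
  exact homDim_congr (RepIso.refl _) (RepIso.linHom_dual_linHom _ _)

/-- For `λ = λ^M` `p`-regular (`p` odd) with
`D^λ↓_{A_n} ≅ E^λ_+ ⊕ E^λ_-`, and any finite-dimensional `FΣ_n`-module `V`:
`dim Hom_{A_n}(V↓, Hom_F(E^λ_+ ⊕ E^λ_-, E^λ_±))
 = dim Hom_{A_n}(Hom_F(E^λ_±, E^λ_+ ⊕ E^λ_-), V*↓)
 = dim Hom_{Σ_n}(V, End_F(D^λ))`. -/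
theorem statement_6 (F : Type) [Field F] [IsAlgClosed F] (p : ℕ) (hp3 : 3 ≤ p)
    [CharP F p] (n : ℕ) (T : SMTheory F p n)
    (lam : Ptn) (h1 : IsPtnOf lam n) (h2 : PReg p lam) (hmull : T.mull lam = lam)
    (E1 E2 : RepOb F (alternatingGroup (Fin n)))
    (hE1 : Irr E1.rep) (hE2 : Irr E2.rep) (hni : ¬ RepIso E1.rep E2.rep)
    (hsplit : RepIso (resAlt (T.D lam).rep) (prodRep E1.rep E2.rep))
    (V : Type) [AddCommGroup V] [Module F V] [FiniteDimensional F V]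
    (ρ : Representation F (Equiv.Perm (Fin n)) V) :
    homDim (resAlt ρ) ((prodRep E1.rep E2.rep).linHom E1.rep) =
      homDim (E1.rep.linHom (prodRep E1.rep E2.rep)) (resAlt ρ.dual) ∧
    homDim (resAlt ρ) ((prodRep E1.rep E2.rep).linHom E1.rep) =
      homDim ρ ((T.D lam).rep.linHom (T.D lam).rep) :=
  statement_6_general F p hp3 n T lam h1 h2 hmull E1 E2 hE1 hE2 hsplit V ρ

end IrrTensor
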